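/- Let b > 0 and let V be a nonnegative integrable function on (b,b+1) with ∫_b^{b+1} V(r) dr ≤ 3. Then for every continuously differentiable function u : [b,b+1] → ℝ satisfying ∫_b^{b+1} u(r)·√r dr = 0, one has ∫_b^{b+1} V(r)·u(r)² dr ≤ ∫_b^{b+1} ( (d/dr)( u(r)·r^{−1/2} ) )² · r dr. -/

import Mathlib

/-!
With `W r := u r / √r` the constraint reads `∫ W r · r dr = 0` and the form is `∫ W'² r dr`.
Fix `t`. Integrating `W'` by parts against the kernel `(r² - b²)/2` on `[b, t]` and
`(r² - (b+1)²)/2` on `[t, b+1]` (whose derivative is `r`, so the constraint removes the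
bulk term) gives `(b + 1/2) W t` as an integral of `W'`, and weighted Cauchy–Schwarz bounds it
by `∫ W'² r · ∫ kernel² / r`. The kernel integrals are at most `(b + 1/2)² / (3t)`, so
`u t ² = t (W t)² ≤ h_b[u] / 3`, and integrating against `V` with `∫ V ≤ 3` concludes.

The exact kernel integrals contain `log`, and the bound is asymptotically sharp as `b → ∞`.
Replacing `1/r` by a rational majorant tangent to it at two points of `[b, b+1]` turns the bound
into a polynomial inequality, certified by an expansion in powers of `t - b` and `b + 1 - t`
whose coefficients are polynomials in `b` with nonnegative coefficients.
-/

open MeasureTheory Set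

theorem sq_integral_mul_le_integral_mul_integral_div {α : Type*} [MeasurableSpace α]
    {μ : Measure α} {f g w : α → ℝ} (hw : ∀ᵐ x ∂μ, 0 < w x)
    (hf : Integrable (fun x => f x ^ 2 * w x) μ) (hg : Integrable (fun x => g x ^ 2 / w x) μ)
    (hfg : Integrable (fun x => f x * g x) μ) :
    (∫ x, f x * g x ∂μ) ^ 2 ≤ (∫ x, f x ^ 2 * w x ∂μ) * ∫ x, g x ^ 2 / w x ∂μ := by
  set A := ∫ x, f x ^ 2 * w x ∂μ
  set B := ∫ x, f x * g x ∂μ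
  set C := ∫ x, g x ^ 2 / w x ∂μ
  have hquad : ∀ y : ℝ, 0 ≤ C * (y * y) + (-2 * B) * y + A := by
    intro y
    have hexpand : ∫ x, (f x * w x - y * g x) ^ 2 / w x ∂μ = C * (y * y) + (-2 * B) * y + A := by
      rw [integral_congr_ae (g := fun x => f x ^ 2 * w x - (2 * y) * (f x * g x)
          + (y * y) * (g x ^ 2 / w x)) (hw.mono fun x hx => by field_simp; ring),
        integral_add (f := fun x => f x ^ 2 * w x - 2 * y * (f x * g x))
          (hf.sub (hfg.const_mul _)) (hg.const_mul _), integral_sub hf (hfg.const_mul _),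
        integral_const_mul, integral_const_mul]
      ring
    rw [← hexpand]
    exact integral_nonneg_of_ae (hw.mono fun x hx => by positivity)
  have := discrim_le_zero hquad
  rw [discrim] at this
  nlinarith

lemma sq_add_le_add_mul_add {x y a b c d : ℝ} (ha : 0 ≤ a) (hb : 0 ≤ b) (hc : 0 ≤ c)
    (hd : 0 ≤ d) (hx : x ^ 2 ≤ a * c) (hy : y ^ 2 ≤ b * d) : (x + y) ^ 2 ≤ (a + b) * (c + d) := by
  have hprod : (x * y) ^ 2 ≤ (a * d) * (b * c) := by
    rw [mul_pow]; nlinarith [mul_le_mul hx hy (sq_nonneg y) (mul_nonneg ha hc)]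
  have hxy : 2 * (x * y) ≤ a * d + b * c :=
    le_of_sq_le_sq (by nlinarith [sq_nonneg (a * d - b * c)]) (by positivity)
  nlinarith

theorem mul_eq_integral_deriv_mul_kernel {W G : ℝ → ℝ} {a c t : ℝ} (hat : a ≤ t) (htc : t ≤ c)
    (hW : ContinuousOn W (Icc a c)) (hWG : ∀ x ∈ Ioo a c, HasDerivAt W (G x) x)
    (hG : IntervalIntegrable G volume a c) (horth : ∫ x in a..c, W x * x = 0) :
    W t * ((c ^ 2 - a ^ 2) / 2)
      = (∫ x in a..t, G x * ((x ^ 2 - a ^ 2) / 2)) + ∫ x in t..c, G x * ((x ^ 2 - c ^ 2) / 2) := by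
  have hparts : ∀ p q m : ℝ, a ≤ p → p ≤ q → q ≤ c →
      ∫ x in p..q, G x * ((x ^ 2 - m ^ 2) / 2) + W x * x
        = W q * ((q ^ 2 - m ^ 2) / 2) - W p * ((p ^ 2 - m ^ 2) / 2) := by
    intro p q m hap hpq hqc
    have hsub : uIcc p q ⊆ Icc a c := uIcc_of_le hpq ▸ Icc_subset_Icc hap hqc
    refine intervalIntegral.integral_deriv_mul_eq_sub_of_hasDerivAt (hW.mono hsub) (by fun_prop)
      (fun x hx => hWG x ?_) (fun x _ => ?_) (hG.mono_set (uIcc_of_le (hat.trans htc) ▸ hsub))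
      intervalIntegral.intervalIntegrable_id
    · rw [min_eq_left hpq, max_eq_right hpq] at hx
      exact ⟨hap.trans_lt hx.1, hx.2.trans_le hqc⟩
    · simpa using ((hasDerivAt_pow 2 x).sub_const (m ^ 2)).div_const 2
  have hWx : ContinuousOn (fun x => W x * x) (Icc a c) := hW.mul continuousOn_id
  have hWx₁ := (hWx.mono (Icc_subset_Icc_right htc)).intervalIntegrable_of_Icc (μ := volume) hat
  have hWx₂ := (hWx.mono (Icc_subset_Icc_left hat)).intervalIntegrable_of_Icc (μ := volume) htc
  have hG₁ : IntervalIntegrable G volume a t :=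
    hG.mono_set (by rw [uIcc_of_le hat, uIcc_of_le (hat.trans htc)]; exact Icc_subset_Icc_right htc)
  have hG₂ : IntervalIntegrable G volume t c :=
    hG.mono_set (by rw [uIcc_of_le htc, uIcc_of_le (hat.trans htc)]; exact Icc_subset_Icc_left hat)
  have h₁ := hparts a t a le_rfl hat htc
  have h₂ := hparts t c c hat htc le_rfl
  rw [intervalIntegral.integral_add (hG₁.mul_continuousOn (by fun_prop)) hWx₁] at h₁
  rw [intervalIntegral.integral_add (hG₂.mul_continuousOn (by fun_prop)) hWx₂] at h₂
  rw [← intervalIntegral.integral_add_adjacent_intervals hWx₁ hWx₂] at horth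
  linear_combination horth - h₁ - h₂

theorem integral_mul_le_mul_integral_of_le {V g : ℝ → ℝ} {a c M : ℝ} (hac : a ≤ c)
    (hV : ∀ x ∈ Ioo a c, 0 ≤ V x) (hVint : IntegrableOn V (Ioo a c))
    (hg : ContinuousOn g (Icc a c)) (hgM : ∀ x ∈ Ioo a c, g x ≤ M) :
    ∫ x in a..c, V x * g x ≤ M * ∫ x in a..c, V x := by
  simp only [intervalIntegral.integral_of_le hac, integral_Ioc_eq_integral_Ioo,
    ← integral_const_mul]
  exact setIntegral_mono_on
    (hVint.mul_continuousOn_of_subset hg measurableSet_Ioo isCompact_Icc Ioo_subset_Icc_self)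
    (hVint.const_mul M) measurableSet_Ioo fun x hx => by
      rw [mul_comm M]; exact mul_le_mul_of_nonneg_left (hgM x hx) (hV x hx)

noncomputable def majorantDenom (b : ℝ) : ℝ := 2 * (2 * b + 1) * (b ^ 2 + b + 3 / 16)

/-- `majorantDenom b` makes the `x⁻¹` terms cancel: with `s = 2b + 1` and
`P = (b + 1/4)(b + 3/4)`, `invMajorant b x = (x² - 2sx + s² + 2P + P²/x²) / majorantDenom b`,
so its products with polynomials have primitives without logarithms. -/
noncomputable def invMajorant (b x : ℝ) : ℝ :=
  x⁻¹ + ((x - (b + 1 / 4)) * (x - (b + 3 / 4))) ^ 2 / (majorantDenom b * x ^ 2)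

noncomputable def majorantPrimitive (b c x : ℝ) : ℝ :=
  let s := 2 * b + 1
  let P := b ^ 2 + b + 3 / 16
  (x ^ 7 / 7 - s * x ^ 6 / 3 + (s ^ 2 + 2 * P - 2 * c ^ 2) * x ^ 5 / 5 + c ^ 2 * s * x ^ 4
    + (P ^ 2 - 2 * c ^ 2 * (s ^ 2 + 2 * P) + c ^ 4) * x ^ 3 / 3 - c ^ 4 * s * x ^ 2
    + (c ^ 4 * (s ^ 2 + 2 * P) - 2 * c ^ 2 * P ^ 2) * x - c ^ 4 * P ^ 2 * x⁻¹)
    / (4 * majorantDenom b)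

lemma majorantDenom_pos {b : ℝ} (hb : 0 ≤ b) : 0 < majorantDenom b := by
  unfold majorantDenom; positivity

lemma inv_le_invMajorant {b x : ℝ} (hb : 0 ≤ b) (hx : 0 < x) : x⁻¹ ≤ invMajorant b x := by
  have := majorantDenom_pos hb
  unfold invMajorant
  exact le_add_of_nonneg_right (by positivity)

lemma invMajorant_pos {b x : ℝ} (hb : 0 ≤ b) (hx : 0 < x) : 0 < invMajorant b x :=
  (inv_pos.2 hx).trans_le (inv_le_invMajorant hb hx)

lemma continuousOn_invMajorant {b : ℝ} {s : Set ℝ} (hb : 0 ≤ b) (hs : ∀ x ∈ s, 0 < x) :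
    ContinuousOn (invMajorant b) s := by
  have hE := majorantDenom_pos hb
  refine fun x hx => ContinuousAt.continuousWithinAt ?_
  have := hs x hx
  unfold invMajorant
  fun_prop (disch := positivity)

lemma hasDerivAt_majorantPrimitive {b c x : ℝ} (hb : 0 ≤ b) (hx : x ≠ 0) :
    HasDerivAt (majorantPrimitive b c) (((x ^ 2 - c ^ 2) / 2) ^ 2 * invMajorant b x) x := by
  have hE := (majorantDenom_pos hb).ne'
  set s := 2 * b + 1
  set P := b ^ 2 + b + 3 / 16
  have h := (((((((((hasDerivAt_pow 7 x).div_const 7).sub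
    (((hasDerivAt_pow 6 x).const_mul s).div_const 3)).add
    (((hasDerivAt_pow 5 x).const_mul (s ^ 2 + 2 * P - 2 * c ^ 2)).div_const 5)).add
    ((hasDerivAt_pow 4 x).const_mul (c ^ 2 * s))).add
    (((hasDerivAt_pow 3 x).const_mul (P ^ 2 - 2 * c ^ 2 * (s ^ 2 + 2 * P) + c ^ 4)).div_const
      3)).sub
    ((hasDerivAt_pow 2 x).const_mul (c ^ 4 * s))).add
    ((hasDerivAt_id x).const_mul (c ^ 4 * (s ^ 2 + 2 * P) - 2 * c ^ 2 * P ^ 2))).sub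
    ((hasDerivAt_inv hx).const_mul (c ^ 4 * P ^ 2))).div_const (4 * majorantDenom b)
  refine (h : HasDerivAt (majorantPrimitive b c) _ x).congr_deriv ?_
  simp only [s, P, invMajorant, majorantDenom] at hE ⊢
  field_simp
  ring

lemma integral_kernel_sq_mul_invMajorant {b c p q : ℝ} (hb : 0 ≤ b) (hp : 0 < p) (hpq : p ≤ q) :
    ∫ x in p..q, ((x ^ 2 - c ^ 2) / 2) ^ 2 * invMajorant b x
      = majorantPrimitive b c q - majorantPrimitive b c p := by
  have hpos : ∀ x ∈ uIcc p q, 0 < x := fun x hx => hp.trans_le (uIcc_of_le hpq ▸ hx).1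
  exact intervalIntegral.integral_eq_sub_of_hasDerivAt
    (fun x hx => hasDerivAt_majorantPrimitive hb (hpos x hx).ne')
    ((ContinuousOn.mul (by fun_prop) (continuousOn_invMajorant hb hpos)).intervalIntegrable)

lemma majorantPrimitive_increments_le {b t : ℝ} (hb : 0 < b) (hbt : b ≤ t) (htb : t ≤ b + 1) :
    (majorantPrimitive b b t - majorantPrimitive b b b)
      + (majorantPrimitive b (b + 1) (b + 1) - majorantPrimitive b (b + 1) t)
      ≤ (b + 1 / 2) ^ 2 / (3 * t) := by
  have hx : 0 ≤ t - b := by linarith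
  have hy : 0 ≤ b + 1 - t := by linarith
  have ht : 0 < t := by linarith
  have hE := majorantDenom_pos hb.le
  have key : (b + 1 / 2) ^ 2 / (3 * t) - ((majorantPrimitive b b t - majorantPrimitive b b b)
      + (majorantPrimitive b (b + 1) (b + 1) - majorantPrimitive b (b + 1) t))
      = ((b + 1 - t) ^ 6 * (69/256 + 697/448 * b + 14/5 * b ^ 2 + 8/5 * b ^ 3)
        + (t - b) * (b + 1 - t) ^ 5
          * (421/896 + 15247/2240 * b + 349/10 * b ^ 2 + 433/5 * b ^ 3 + 104 * b ^ 4 + 48 * b ^ 5)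
        + (t - b) ^ 2 * (b + 1 - t) ^ 4
          * (3979/1792 + 15019/448 * b + 170 * b ^ 2 + 400 * b ^ 3 + 448 * b ^ 4 + 192 * b ^ 5)
        + (t - b) ^ 3 * (b + 1 - t) ^ 3
          * (2945/448 + 16161/224 * b + 321 * b ^ 2 + 694 * b ^ 3 + 720 * b ^ 4 + 288 * b ^ 5)
        + (t - b) ^ 4 * (b + 1 - t) ^ 2
          * (9505/1792 + 27563/448 * b + 262 * b ^ 2 + 528 * b ^ 3 + 512 * b ^ 4 + 192 * b ^ 5)
        + (t - b) ^ 5 * (b + 1 - t)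
          * (1825/896 + 46607/2240 * b + 809/10 * b ^ 2 + 753/5 * b ^ 3 + 136 * b ^ 4 + 48 * b ^ 5)
        + (t - b) ^ 6 * (773/8960 + 1693/2240 * b + 2 * b ^ 2 + 8/5 * b ^ 3))
        / (12 * t * majorantDenom b) := by
    have hb0 := hb.ne'
    have ht0 := ht.ne'
    have hb1 : b + 1 ≠ 0 := by positivity
    unfold majorantPrimitive
    field_simp
    unfold majorantDenom
    ring
  rw [← sub_nonneg, key]
  -- `positivity` takes the signs of the atoms `t - b` and `b + 1 - t` from `hx` and `hy`
  positivity

lemma sq_integral_mul_kernel_le {b c p q : ℝ} {G : ℝ → ℝ} (hb : 0 ≤ b) (hp : 0 < p)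
    (hpq : p ≤ q) (hG : ContinuousOn G (Icc p q)) :
    (∫ x in p..q, G x * ((x ^ 2 - c ^ 2) / 2)) ^ 2
      ≤ (∫ x in p..q, G x ^ 2 * x) * ∫ x in p..q, ((x ^ 2 - c ^ 2) / 2) ^ 2 * invMajorant b x := by
  have hpos : ∀ x ∈ Icc p q, 0 < x := fun x hx => hp.trans_le hx.1
  have hint : ∀ {F : ℝ → ℝ}, ContinuousOn F (Icc p q) → IntegrableOn F (Ioc p q) :=
    fun hF => hF.integrableOn_Icc.mono_set Ioc_subset_Icc_self
  have hCS := sq_integral_mul_le_integral_mul_integral_div (μ := volume.restrict (Ioc p q))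
    (f := G) (g := fun x => (x ^ 2 - c ^ 2) / 2) (w := id)
    ((ae_restrict_iff' measurableSet_Ioc).2
      (.of_forall fun x hx => hpos x (Ioc_subset_Icc_self hx)))
    (hint ((hG.pow 2).mul continuousOn_id)) (hint (ContinuousOn.div (by fun_prop) continuousOn_id
      fun x hx => (hpos x hx).ne')) (hint (hG.mul (by fun_prop)))
  simp only [id, ← intervalIntegral.integral_of_le hpq] at hCS
  refine hCS.trans (mul_le_mul_of_nonneg_left ?_ ?_)
  · refine intervalIntegral.integral_mono_on hpq ?_ ?_ fun x hx => ?_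
    · exact (ContinuousOn.div (by fun_prop) continuousOn_id
        fun x hx => (hpos x (uIcc_of_le hpq ▸ hx)).ne').intervalIntegrable
    · exact (ContinuousOn.mul (by fun_prop) (continuousOn_invMajorant hb
        fun x hx => hpos x (uIcc_of_le hpq ▸ hx))).intervalIntegrable
    rw [div_eq_mul_inv]
    exact mul_le_mul_of_nonneg_left (inv_le_invMajorant hb (hpos x hx)) (sq_nonneg _)
  · exact intervalIntegral.integral_nonneg hpq fun x hx => by have := hpos x hx; positivity

theorem three_mul_mul_sq_le_integral_sq_deriv_mul {b t : ℝ} {W G : ℝ → ℝ} (hb : 0 < b)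
    (hbt : b ≤ t) (htb : t ≤ b + 1) (hW : ContinuousOn W (Icc b (b + 1)))
    (hWG : ∀ x ∈ Ioo b (b + 1), HasDerivAt W (G x) x) (hG : ContinuousOn G (Icc b (b + 1)))
    (horth : ∫ x in b..(b + 1), W x * x = 0) :
    3 * t * W t ^ 2 ≤ ∫ x in b..(b + 1), G x ^ 2 * x := by
  have ht : 0 < t := hb.trans_le hbt
  have hrep := mul_eq_integral_deriv_mul_kernel hbt htb hW hWG
    (hG.intervalIntegrable_of_Icc (by linarith)) horth
  have hX := sq_integral_mul_kernel_le (c := b) hb.le hb hbt (hG.mono (Icc_subset_Icc_right htb))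
  have hY := sq_integral_mul_kernel_le (c := b + 1) hb.le ht htb (hG.mono (Icc_subset_Icc_left hbt))
  have hF : ∀ {p q}, b ≤ p → p ≤ q → 0 ≤ ∫ x in p..q, G x ^ 2 * x := fun hp hpq =>
    intervalIntegral.integral_nonneg hpq fun x hx => mul_nonneg (sq_nonneg _) (by linarith [hx.1])
  have hQ : ∀ {p q c}, b ≤ p → p ≤ q →
      0 ≤ ∫ x in p..q, ((x ^ 2 - c ^ 2) / 2) ^ 2 * invMajorant b x := fun hp hpq =>
    intervalIntegral.integral_nonneg hpq fun x hx =>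
      mul_nonneg (sq_nonneg _) (invMajorant_pos hb.le (by linarith [hx.1])).le
  have hQsum := majorantPrimitive_increments_le hb hbt htb
  rw [← integral_kernel_sq_mul_invMajorant hb.le hb hbt,
    ← integral_kernel_sq_mul_invMajorant hb.le ht htb] at hQsum
  have key : (W t * (b + 1 / 2)) ^ 2
      ≤ ((∫ x in b..t, G x ^ 2 * x) + ∫ x in t..(b + 1), G x ^ 2 * x)
        * ((b + 1 / 2) ^ 2 / (3 * t)) :=
    calc (W t * (b + 1 / 2)) ^ 2 = (W t * (((b + 1) ^ 2 - b ^ 2) / 2)) ^ 2 := by ring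
      _ ≤ _ := hrep ▸ sq_add_le_add_mul_add (hF le_rfl hbt) (hF hbt htb) (hQ le_rfl hbt)
          (hQ hbt htb) hX hY
      _ ≤ _ := mul_le_mul_of_nonneg_left hQsum (add_nonneg (hF le_rfl hbt) (hF hbt htb))
  have hGx : ContinuousOn (fun x => G x ^ 2 * x) (Icc b (b + 1)) := (hG.pow 2).mul continuousOn_id
  rw [intervalIntegral.integral_add_adjacent_intervals
    ((hGx.mono (Icc_subset_Icc_right htb)).intervalIntegrable_of_Icc hbt)
    ((hGx.mono (Icc_subset_Icc_left hbt)).intervalIntegrable_of_Icc htb)] at key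
  refine le_of_mul_le_mul_right ?_ (by positivity : 0 < (b + 1 / 2) ^ 2 / (3 * t))
  calc 3 * t * W t ^ 2 * ((b + 1 / 2) ^ 2 / (3 * t)) = (W t * (b + 1 / 2)) ^ 2 := by
        field_simp
    _ ≤ _ := key

theorem form_nonneg_orthogonal_sqrt (b : ℝ) (hb : 0 < b) (V : ℝ → ℝ)
    (hV : ∀ r ∈ Set.Ioo b (b + 1), 0 ≤ V r)
    (hVint : MeasureTheory.IntegrableOn V (Set.Ioo b (b + 1)))
    (hVsmall : (∫ r in b..(b + 1), V r) ≤ 3)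
    (u : ℝ → ℝ) (hu : ContDiffOn ℝ 1 u (Set.Icc b (b + 1)))
    (hmean : (∫ r in b..(b + 1), u r * Real.sqrt r) = 0) :
    ∫ r in b..(b + 1), V r * u r ^ 2
      ≤ ∫ r in b..(b + 1),
          (derivWithin (fun s : ℝ => u s * s ^ (-(1 / 2) : ℝ)) (Set.Icc b (b + 1)) r) ^ 2
            * r := by
  have hb1 : b ≤ b + 1 := by linarith
  set W : ℝ → ℝ := fun s => u s * s ^ (-(1 / 2) : ℝ)
  set F := ∫ r in b..(b + 1), derivWithin W (Icc b (b + 1)) r ^ 2 * r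
  have hW : ContDiffOn ℝ 1 W (Icc b (b + 1)) := hu.mul fun s hs =>
    (Real.contDiffAt_rpow_const_of_ne (hb.trans_le hs.1).ne').contDiffWithinAt
  have hWG : ∀ x ∈ Ioo b (b + 1), HasDerivAt W (derivWithin W (Icc b (b + 1)) x) x :=
    fun x hx => (hW.differentiableOn one_ne_zero x (Ioo_subset_Icc_self hx)).hasDerivWithinAt
      |>.hasDerivAt (Icc_mem_nhds hx.1 hx.2)
  have hW_eq : ∀ x, 0 < x → W x = u x / √x := fun x hx => by
    simp only [W, Real.rpow_neg hx.le, Real.sqrt_eq_rpow, div_eq_mul_inv]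
  have horth : ∫ x in b..(b + 1), W x * x = 0 := by
    rw [← hmean]
    refine intervalIntegral.integral_congr fun x hx => ?_
    have hx : 0 < x := hb.trans_le (uIcc_of_le hb1 ▸ hx).1
    rw [hW_eq x hx, div_mul_eq_mul_div, div_eq_iff (Real.sqrt_pos.2 hx).ne', mul_assoc,
      Real.mul_self_sqrt hx.le]
  have hpoint : ∀ t ∈ Ioo b (b + 1), u t ^ 2 ≤ F / 3 := fun t ht => by
    have hbound := three_mul_mul_sq_le_integral_sq_deriv_mul hb ht.1.le ht.2.le hW.continuousOn hWG
      (hW.continuousOn_derivWithin (uniqueDiffOn_Icc (by linarith)) le_rfl) horth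
    have ht0 : 0 < t := hb.trans ht.1
    rw [hW_eq t ht0, div_pow, Real.sq_sqrt ht0.le, mul_assoc, mul_div_cancel₀ _ ht0.ne'] at hbound
    linarith
  have hF : 0 ≤ F := intervalIntegral.integral_nonneg hb1 fun x hx =>
    mul_nonneg (sq_nonneg _) (by linarith [hx.1])
  calc ∫ r in b..(b + 1), V r * u r ^ 2 ≤ F / 3 * ∫ r in b..(b + 1), V r :=
        integral_mul_le_mul_integral_of_le hb1 hV hVint (hu.continuousOn.pow 2) hpoint
    _ ≤ F / 3 * 3 := by gcongr
    _ = F := by ring
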